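/- Let A, E ∈ ℝ^{m×n}, Ã := A + E, and assume every row ã_i of Ã is nonzero. Let x_LS ∈ ℝ^n, b := A x_LS, ε ∈ ℝ^m, b̃ := b + ε, and set p_i := ‖ã_i‖²/‖Ã‖_F² and K_i(x) := x − ((⟨ã_i, x⟩ − b̃_i)/‖ã_i‖²) ã_i. Let σ > 0 satisfy ‖Ã z‖ ≥ σ‖z‖ for every z ∈ range(Ãᵀ). Then for every x ∈ ℝ^n with x − x_LS ∈ range(Ãᵀ), Σ_{i=1}^m p_i ‖K_i(x) − x_LS‖² ≤ (1 − σ²/‖Ã‖_F²) ‖x − x_LS‖² + ‖E x_LS − ε‖²/‖Ã‖_F². -/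

import Mathlib

open Matrix
open scoped RealInnerProductSpace

/-- The `i`-th row of a matrix, viewed as a vector in Euclidean space. -/
noncomputable def row {m n : ℕ} (M : Matrix (Fin m) (Fin n) ℝ) (i : Fin m) :
    EuclideanSpace ℝ (Fin n) :=
  (WithLp.equiv 2 (Fin n → ℝ)).symm (M i)

/-- Matrix-vector multiplication as a map between Euclidean spaces. -/
noncomputable def mulVecE {m n : ℕ} (M : Matrix (Fin m) (Fin n) ℝ)
    (x : EuclideanSpace ℝ (Fin n)) : EuclideanSpace ℝ (Fin m) :=
  Matrix.toEuclideanLin M x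

/-- The Kaczmarz update of `x` for the system `M y = c`, using row `i`:
`x ↦ x - ((⟨mᵢ, x⟩ - cᵢ)/‖mᵢ‖²) mᵢ`. -/
noncomputable def kaczmarz {m n : ℕ} (M : Matrix (Fin m) (Fin n) ℝ) (c : Fin m → ℝ) (i : Fin m)
    (x : EuclideanSpace ℝ (Fin n)) : EuclideanSpace ℝ (Fin n) :=
  x - ((⟪_root_.row M i, x⟫ - c i) / ‖_root_.row M i‖ ^ 2) • _root_.row M i

/-- Iterated Kaczmarz updates along the index sequence `is = (i₁, …, i_k)`,
applying row `i₁` first: `K_{i_k}(⋯ K_{i₁}(x₀) ⋯)`. -/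
noncomputable def kaczmarzIter {m n k : ℕ} (M : Matrix (Fin m) (Fin n) ℝ) (c : Fin m → ℝ)
    (is : Fin k → Fin m) (x0 : EuclideanSpace ℝ (Fin n)) : EuclideanSpace ℝ (Fin n) :=
  (List.ofFn is).foldl (fun x i => kaczmarz M c i x) x0

/-- The squared Frobenius norm `‖M‖_F² = Σ_{i,j} M_{ij}²`. -/
noncomputable def frobSq {m n : ℕ} (M : Matrix (Fin m) (Fin n) ℝ) : ℝ :=
  ∑ i, ∑ j, (M i j) ^ 2

/-- The row space `range(Mᵀ)` of a matrix, as a submodule of Euclidean space. -/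
noncomputable def rowSpace {m n : ℕ} (M : Matrix (Fin m) (Fin n) ℝ) :
    Submodule ℝ (EuclideanSpace ℝ (Fin n)) :=
  LinearMap.range (Matrix.toEuclideanLin Mᵀ)

/-- The spectral norm (operator 2-norm) of a matrix. -/
noncomputable def specNorm {m n : ℕ} (M : Matrix (Fin m) (Fin n) ℝ) : ℝ :=
  ‖LinearMap.toContinuousLinearMap (Matrix.toEuclideanLin M)‖

/-!
Write `e = x - x_LS` and `r = Ã x_LS - b̃ = E x_LS - ε`. The update with row `a = ãᵢ` moves the
error to `e - ((⟪a, e⟫ + rᵢ) / ‖a‖²) a`, whose squared norm times `‖a‖²` is, by expanding,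
`‖a‖² ‖e‖² + rᵢ² - ⟪a, e⟫²`. Summing over `i` gives
`‖Ã‖_F² ‖e‖² + ‖r‖² - ‖Ã e‖²`, and `‖Ã e‖ ≥ σ ‖e‖` because `e` lies in the row space.
-/

theorem norm_sq_mul_norm_sub_smul_sq_le {F : Type*} [NormedAddCommGroup F]
    [InnerProductSpace ℝ F] (a e : F) (r : ℝ) :
    ‖a‖ ^ 2 * ‖e - ((⟪a, e⟫ + r) / ‖a‖ ^ 2) • a‖ ^ 2 ≤ ‖a‖ ^ 2 * ‖e‖ ^ 2 + r ^ 2 - ⟪a, e⟫ ^ 2 := by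
  -- equality for `a ≠ 0`; for `a = 0` the left side vanishes and only `r ^ 2 ≥ 0` is left
  rcases eq_or_ne a 0 with rfl | ha
  · simp only [norm_zero, inner_zero_left, smul_zero]
    nlinarith [sq_nonneg r]
  · have ha2 : ‖a‖ ^ 2 ≠ 0 := by positivity
    apply le_of_eq
    rw [norm_sub_sq_real, real_inner_smul_right, norm_smul, real_inner_comm, Real.norm_eq_abs,
      mul_pow, sq_abs]
    field_simp
    ring

section Kaczmarz

variable {m n : ℕ} (M : Matrix (Fin m) (Fin n) ℝ)

theorem inner_row (i : Fin m) (y : EuclideanSpace ℝ (Fin n)) :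
    ⟪_root_.row M i, y⟫ = mulVecE M y i := by
  simp [_root_.row, mulVecE, PiLp.inner_apply, Matrix.mulVec, dotProduct, mul_comm]

theorem frobSq_eq_sum_norm_row_sq : frobSq M = ∑ i, ‖_root_.row M i‖ ^ 2 := by
  simp [frobSq, EuclideanSpace.real_norm_sq_eq, _root_.row]

theorem frobSq_nonneg : 0 ≤ frobSq M := by
  unfold frobSq
  positivity

theorem kaczmarz_sub (c : Fin m → ℝ) (i : Fin m) (x z : EuclideanSpace ℝ (Fin n)) :
    kaczmarz M c i x - z = (x - z) - ((⟪_root_.row M i, x - z⟫ + (mulVecE M z i - c i)) /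
      ‖_root_.row M i‖ ^ 2) • _root_.row M i := by
  rw [kaczmarz, inner_sub_right, ← inner_row, sub_add_sub_cancel, sub_right_comm]

theorem sum_norm_row_sq_mul_norm_kaczmarz_sub_sq_le (c : Fin m → ℝ)
    (x z : EuclideanSpace ℝ (Fin n)) :
    ∑ i, ‖_root_.row M i‖ ^ 2 * ‖kaczmarz M c i x - z‖ ^ 2 ≤
      frobSq M * ‖x - z‖ ^ 2 + ∑ i, (mulVecE M z i - c i) ^ 2 - ‖mulVecE M (x - z)‖ ^ 2 := by
  calc ∑ i, ‖_root_.row M i‖ ^ 2 * ‖kaczmarz M c i x - z‖ ^ 2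
      ≤ ∑ i, (‖_root_.row M i‖ ^ 2 * ‖x - z‖ ^ 2 + (mulVecE M z i - c i) ^ 2
          - ⟪_root_.row M i, x - z⟫ ^ 2) := by
        gcongr with i
        rw [kaczmarz_sub]
        exact norm_sq_mul_norm_sub_smul_sq_le _ _ _
    _ = _ := by
        rw [Finset.sum_sub_distrib, Finset.sum_add_distrib, ← Finset.sum_mul,
          ← frobSq_eq_sum_norm_row_sq, EuclideanSpace.real_norm_sq_eq (mulVecE M (x - z))]
        simp only [inner_row]

end Kaczmarz

theorem kaczmarz_expected_one_step_contraction_general {m n : ℕ}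
    (A E : Matrix (Fin m) (Fin n) ℝ)
    (xLS : EuclideanSpace ℝ (Fin n)) (ε : EuclideanSpace ℝ (Fin m))
    (σ : ℝ) (hσ : 0 < σ)
    (hσA : ∀ z ∈ rowSpace (A + E), σ * ‖z‖ ≤ ‖mulVecE (A + E) z‖)
    (x : EuclideanSpace ℝ (Fin n)) (hx : x - xLS ∈ rowSpace (A + E)) :
    ∑ i, (‖_root_.row (A + E) i‖ ^ 2 / frobSq (A + E)) *
        ‖kaczmarz (A + E) (fun j => mulVecE A xLS j + ε j) i x - xLS‖ ^ 2
      ≤ (1 - σ ^ 2 / frobSq (A + E)) * ‖x - xLS‖ ^ 2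
        + ‖mulVecE E xLS - ε‖ ^ 2 / frobSq (A + E) := by
  have hresidual : ∑ i, (mulVecE (A + E) xLS i - (mulVecE A xLS i + ε i)) ^ 2
      = ‖mulVecE E xLS - ε‖ ^ 2 := by
    rw [EuclideanSpace.real_norm_sq_eq]
    congr! 2 with i
    simp [mulVecE]
  have hlower : σ ^ 2 * ‖x - xLS‖ ^ 2 ≤ ‖mulVecE (A + E) (x - xLS)‖ ^ 2 := by
    rw [← mul_pow]
    exact pow_le_pow_left₀ (by positivity) (hσA _ hx) 2
  have hsum := sum_norm_row_sq_mul_norm_kaczmarz_sub_sq_le (A + E)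
    (fun j => mulVecE A xLS j + ε j) x xLS
  rw [hresidual] at hsum
  simp only [div_mul_eq_mul_div, ← Finset.sum_div]
  rcases (frobSq_nonneg (A + E)).eq_or_lt with hF | hF
  · simp only [← hF, div_zero, sub_zero, one_mul, add_zero]
    positivity
  · rw [div_le_iff₀ hF]
    calc _ ≤ _ := hsum
      _ ≤ frobSq (A + E) * ‖x - xLS‖ ^ 2 + ‖mulVecE E xLS - ε‖ ^ 2 - σ ^ 2 * ‖x - xLS‖ ^ 2 := by
        linarith
      _ = _ := by
        field_simp
        ring

/-- One-step expected contraction bound for randomized Kaczmarz on the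
doubly-noisy system `Ãx ≈ b̃`, where `Ã = A + E`, `b = A x_LS`, `b̃ = b + ε`,
and `σ > 0` is a lower bound for `Ã` on its row space. -/
theorem kaczmarz_expected_one_step_contraction {m n : ℕ}
    (A E : Matrix (Fin m) (Fin n) ℝ)
    (hrow : ∀ i, _root_.row (A + E) i ≠ 0)
    (xLS : EuclideanSpace ℝ (Fin n)) (ε : EuclideanSpace ℝ (Fin m))
    (σ : ℝ) (hσ : 0 < σ)
    (hσA : ∀ z ∈ rowSpace (A + E), σ * ‖z‖ ≤ ‖mulVecE (A + E) z‖)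
    (x : EuclideanSpace ℝ (Fin n)) (hx : x - xLS ∈ rowSpace (A + E)) :
    ∑ i, (‖_root_.row (A + E) i‖ ^ 2 / frobSq (A + E)) *
        ‖kaczmarz (A + E) (fun j => mulVecE A xLS j + ε j) i x - xLS‖ ^ 2
      ≤ (1 - σ ^ 2 / frobSq (A + E)) * ‖x - xLS‖ ^ 2
        + ‖mulVecE E xLS - ε‖ ^ 2 / frobSq (A + E) :=
  kaczmarz_expected_one_step_contraction_general A E xLS ε σ hσ hσA x hx
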